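/- For every finite V ⊂ ℤ², every β > 0, all boundary conditions φ ≤ φ' (pointwise on ∂_o V), and all floor/ceiling pairs with a_v ≤ a_v' and b_v ≤ b_v' for all v ∈ V, the map λ ↦ Z^{a,b,φ}_{λ,V} / Z^{a',b',φ'}_{λ,V} is nondecreasing in λ, i.e., its derivative with respect to λ is nonnegative. -/

import Mathlib

open scoped BigOperators
open Filter

noncomputable section

attribute [local instance] Classical.propDecidable

/-! ### Basic geometry of the square lattice -/

/-- Sites of the square lattice `ℤ²`. -/
abbrev Site := ℤ × ℤ

/-- The four unit directions. -/
def dirs : Finset Site := {(1, 0), (-1, 0), (0, 1), (0, -1)}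

/-- The box `Λ_n = ⟦-n/2, n/2⟧² ∩ ℤ²`. -/
def box (n : ℕ) : Finset Site :=
  Finset.Icc (-((n : ℤ) / 2)) ((n : ℤ) / 2) ×ˢ Finset.Icc (-((n : ℤ) / 2)) ((n : ℤ) / 2)

/-- SOS gradient energy of a height function on a domain `V`: each nearest-neighbour
edge with at least one endpoint in `V` contributes the absolute height gradient
(the directed sum below counts internal edges twice, whence the factor `1/2`). -/
def sosEnergy (V : Finset Site) (ψ : Site → ℤ) : ℝ :=
  ∑ v ∈ V, ∑ d ∈ dirs,
    (if v + d ∈ V then (1 : ℝ) / 2 else 1) * |(ψ v : ℝ) - (ψ (v + d) : ℝ)|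

/-- The bulk field term `Σ_{v ∈ V} ψ_v`. -/
def sosField (V : Finset Site) (ψ : Site → ℤ) : ℝ := ∑ v ∈ V, (ψ v : ℝ)

/-- The SOS weight `exp(-β Σ|∇ψ| - λ Σ ψ)`. -/
def sosWt (β lam : ℝ) (V : Finset Site) (ψ : Site → ℤ) : ℝ :=
  Real.exp (-(β * sosEnergy V ψ + lam * sosField V ψ))

/-- The inner boundary `∂_i V`. -/
def innerBdry (V : Finset Site) : Finset Site :=
  V.filter fun v => ∃ d ∈ dirs, v + d ∉ V

/-- The interior `V̊ = V ∖ ∂_i V`. -/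
def interiorSites (V : Finset Site) : Finset Site := V \ innerBdry V

/-- The number of edges `|∂_e V|` between `V` and its complement. -/
def edgeBdryCard (V : Finset Site) : ℕ :=
  ∑ v ∈ V, (dirs.filter fun d => v + d ∉ V).card

/-- Nearest-neighbour adjacency. -/
def adjS (u v : Site) : Prop := v - u ∈ dirs

/-- A set of sites is connected (as a subgraph of `ℤ²`). -/
def connectedIn (S : Set Site) : Prop :=
  ∀ x ∈ S, ∀ y ∈ S,
    Relation.ReflTransGen (fun a b => adjS a b ∧ a ∈ S ∧ b ∈ S) x y

/-- A finite set of sites is simply connected: it is connected and its complement is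
connected. -/
def SimplyConn (V : Finset Site) : Prop :=
  connectedIn (↑V : Set Site) ∧ connectedIn ((↑V : Set Site)ᶜ)

/-! ### SOS measures with a boundary signing -/

/-- A boundary signing value: `+`, `-`, `∅` or free. -/
inductive BSign | plus | minus | zero | free

/-- The constraint imposed at an inner-boundary site by a signing, for boundary height
`h`: `+` forces `≥ h`, `-` forces `≤ h`, `∅` forces `= h`, and `f` forces nothing. -/
def BSign.ok : BSign → ℤ → ℤ → Prop
  | .plus, h, t => h ≤ t
  | .minus, h, t => t ≤ h
  | .zero, h, t => t = h
  | .free, _, _ => True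

/-- Height functions with boundary condition identically `h` outside `V`, floor `0`
on `V` (and no ceiling), compatible with the boundary signing `η` along `∂_i V`. -/
def signedConfigs (V : Finset Site) (η : Site → BSign) (h : ℤ) : Set (Site → ℤ) :=
  {ψ | (∀ x, x ∉ V → ψ x = h) ∧ (∀ v ∈ V, 0 ≤ ψ v) ∧
       ∀ v ∈ innerBdry V, BSign.ok (η v) h (ψ v)}

/-- The partition function `Z_{η,h,V}`. -/
def Zsos (β lam : ℝ) (η : Site → BSign) (h : ℤ) (V : Finset Site) : ℝ :=
  ∑' ψ : Site → ℤ, Set.indicator (signedConfigs V η h) (sosWt β lam V) ψ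

/-- Probability of an event under the SOS measure `μ_{η,h,V}`. -/
def Psos (β lam : ℝ) (η : Site → BSign) (h : ℤ) (V : Finset Site)
    (E : Set (Site → ℤ)) : ℝ :=
  (∑' ψ : Site → ℤ, Set.indicator (signedConfigs V η h ∩ E) (sosWt β lam V) ψ) /
    Zsos β lam η h V

/-! ### Contours -/

/-- A (signed geometric) contour, encoded by the finite set of sites it encloses and its
sign (up/down); the contour itself is the dual circuit `(∂_e Int)^*`. -/
structure Contour where
  int : Finset Site
  up : Bool

/-- The length `|γ|` of a contour: the number of boundary edges of its interior. -/
def Contour.len (γ : Contour) : ℕ := edgeBdryCard γ.int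

/-- A valid contour encloses a nonempty simply-connected set of sites. -/
def Contour.valid (γ : Contour) : Prop :=
  γ.int.Nonempty ∧ connectedIn (↑γ.int : Set Site) ∧ connectedIn ((↑γ.int : Set Site)ᶜ)

/-- The constant boundary signing. -/
def constSign (s : BSign) : Site → BSign := fun _ => s

/-- The `h`-renormalized weight `W^rn_h(γ)`. -/
def Wrn (β lam : ℝ) (h : ℤ) (γ : Contour) : ℝ :=
  if γ.up then
    Real.exp (-β * (γ.len : ℝ)) *
      (Zsos β lam (constSign .plus) (h + 1) γ.int / Zsos β lam (constSign .plus) h γ.int)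
  else
    Real.exp (-β * (γ.len : ℝ)) *
      (Zsos β lam (constSign .minus) (h - 1) γ.int / Zsos β lam (constSign .minus) h γ.int)

/-- The `h`-truncated weight `W^tr_h(γ) = min{W^rn_h(γ), e^{-(β-5)|γ|}}`. -/
def Wtr (β lam : ℝ) (h : ℤ) (γ : Contour) : ℝ :=
  min (Wrn β lam h γ) (Real.exp (-(β - 5) * (γ.len : ℝ)))

/-- The elementary diameter bound `min{λ⁻¹, e^{3β(h+1)}}`. -/
def elemBound (β lam : ℝ) (h : ℤ) : ℝ := min (1 / lam) (Real.exp (3 * β * ((h : ℝ) + 1)))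

/-- A set of sites is `h`-elementary small: the enclosing contour (whose ℓ∞-diameter is
one more than that of the enclosed set) has diameter at most `min{λ⁻¹, e^{3β(h+1)}}`. -/
def elemSet (β lam : ℝ) (h : ℤ) (S : Set Site) : Prop :=
  ∀ x ∈ S, ∀ y ∈ S,
    ((max |x.1 - y.1| |x.2 - y.2| : ℤ) : ℝ) + 1 ≤ elemBound β lam h

/-- A contour is `h`-elementary if `diam(γ) ≤ min{λ⁻¹, e^{3β(h+1)}}`. -/
def IsElem (β lam : ℝ) (h : ℤ) (γ : Contour) : Prop := elemSet β lam h (↑γ.int : Set Site)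

/-- Two finite sets of sites share a (primal, equivalently dual) boundary edge. -/
def shareEdge (A B : Finset Site) : Prop :=
  ∃ v, ∃ d ∈ dirs, (v ∈ A ∧ v + d ∉ A) ∧ ((v ∈ B ∧ v + d ∉ B) ∨ (v + d ∈ B ∧ v ∉ B))

/-- Compatibility of a pair of signed contours: they may not cross, and if they overlap
on an edge their signs agree when nested and differ when mutually external. -/
def compatPair (γ γ' : Contour) : Prop :=
  (γ.int ⊆ γ'.int ∨ γ'.int ⊆ γ.int ∨ Disjoint γ.int γ'.int) ∧
  (shareEdge γ.int γ'.int →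
    ((γ.int ⊆ γ'.int ∨ γ'.int ⊆ γ.int) → γ.up = γ'.up) ∧
    (Disjoint γ.int γ'.int → γ.up ≠ γ'.up))

/-- Admissible renormalized families of signed contours in `U`, compatible with the
boundary signing `η` at reference height `h` (no floor constraint except that no
down-contours are allowed when `h = 0`). -/
def famOK (η : Site → BSign) (h : ℤ) (U : Finset Site) (Γ : Multiset Contour) : Prop :=
  (∀ γ ∈ Γ, Contour.valid γ ∧ γ.int ⊆ U) ∧
  (∀ γ ∈ Γ, ∀ γ' ∈ Γ, compatPair γ γ') ∧
  (∀ v ∈ innerBdry U, ∀ γ ∈ Γ, v ∈ γ.int →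
    (γ.up = true → η v ≠ BSign.minus ∧ η v ≠ BSign.zero) ∧
    (γ.up = false → η v ≠ BSign.plus ∧ η v ≠ BSign.zero)) ∧
  (h = 0 → ∀ γ ∈ Γ, γ.up = true)

/-- The product of weights of a family of contours. -/
def prodW (w : Contour → ℝ) (Γ : Multiset Contour) : ℝ := (Γ.map w).prod

/-- The truncated partition function `Z^tr_{η,h,U}`. -/
def Ztr (β lam : ℝ) (η : Site → BSign) (h : ℤ) (U : Finset Site) : ℝ :=
  Real.exp (-lam * (h : ℝ) * (U.card : ℝ)) *
    ∑' Γ : Multiset Contour, Set.indicator {Γ | famOK η h U Γ} (prodW (Wtr β lam h)) Γ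

/-- The renormalized partition function `Z^rn_{η,h,U}`. -/
def Zrn (β lam : ℝ) (η : Site → BSign) (h : ℤ) (U : Finset Site) : ℝ :=
  Real.exp (-lam * (h : ℝ) * (U.card : ℝ)) *
    ∑' Γ : Multiset Contour, Set.indicator {Γ | famOK η h U Γ} (prodW (Wrn β lam h)) Γ

/-- The renormalized elementary partition function `Z^{rn.el}_{η,h,U}`. -/
def Zrnel (β lam : ℝ) (η : Site → BSign) (h : ℤ) (U : Finset Site) : ℝ :=
  Real.exp (-lam * (h : ℝ) * (U.card : ℝ)) *
    ∑' Γ : Multiset Contour,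
      Set.indicator {Γ | famOK η h U Γ ∧ ∀ γ ∈ Γ, IsElem β lam h γ}
        (prodW (Wrn β lam h)) Γ

/-! ### Elementary restriction of the SOS measure -/

/-- `*`-adjacency (adjacency allowing diagonal steps). -/
def starAdj (u v : Site) : Prop := u ≠ v ∧ |u.1 - v.1| ≤ 1 ∧ |u.2 - v.2| ≤ 1

/-- The `*`-connected component of `x` within `S`. -/
def compStar (S : Set Site) (x : Site) : Set Site :=
  {y | Relation.ReflTransGen (fun a b => starAdj a b ∧ a ∈ S ∧ b ∈ S) x y}

/-- The fill of a set of sites: the set together with all sites whose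
complement-component is finite. -/
def fill (C : Set Site) : Set Site :=
  C ∪ {x | {y | Relation.ReflTransGen (fun a b => adjS a b ∧ a ∉ C ∧ b ∉ C) x y}.Finite}

/-- All outermost contours of the configuration `ψ` (with boundary height `h` on `V`)
are `h`-elementary: every filled deviation component is elementary-small. -/
def allOuterElem (β lam : ℝ) (h : ℤ) (V : Finset Site) (ψ : Site → ℤ) : Prop :=
  ∀ v ∈ V, ψ v ≠ h → elemSet β lam h (fill (compStar {u : Site | u ∈ V ∧ ψ u ≠ h} v))

/-- The elementary partition function `Z^el_{η,h,V}`: the contribution to `Z_{η,h,V}`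
of configurations all of whose outermost contours are `h`-elementary. -/
def Zel (β lam : ℝ) (η : Site → BSign) (h : ℤ) (V : Finset Site) : ℝ :=
  ∑' ψ : Site → ℤ,
    Set.indicator (signedConfigs V η h ∩ {ψ | allOuterElem β lam h V ψ})
      (sosWt β lam V) ψ

/-! ### Truncated free energies and the critical sequence -/

/-- `ftr h` is the truncated free energy `f^tr_h(λ)`: the infinite-volume limit of
`|Λ_n|⁻¹ log Z^tr_{η,h,Λ_n}`, for every boundary signing. -/
def FTRlimit (β : ℝ) (ftr : ℕ → ℝ → ℝ) : Prop :=
  ∀ h : ℕ, ∀ lam : ℝ, 0 < lam → lam ≤ 1 → ∀ η : Site → BSign,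
    Tendsto (fun n => Real.log (Ztr β lam η (h : ℤ) (box n)) / ((box n).card : ℝ))
      atTop (nhds (ftr h lam))

/-- `lamc` is the strictly decreasing sequence `(λ_c^{(k)})_{k≥0}` of critical points,
tending to `0`, at which the truncated free energies `ftr` exchange maximizer. -/
def CritSeq (ftr : ℕ → ℝ → ℝ) (lamc : ℕ → ℝ) : Prop :=
  StrictAnti lamc ∧ (∀ i, 0 < lamc i) ∧ Tendsto lamc atTop (nhds 0) ∧
  (∀ i : ℕ, ∀ lam : ℝ, 0 < lam → lam ≤ 1 → lamc i < lam →
    (i = 0 ∨ lam < lamc (i - 1)) → ∀ j : ℕ, j ≠ i → ftr j lam < ftr i lam) ∧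
  (∀ i : ℕ, ftr (i + 1) (lamc i) = ftr i (lamc i) ∧
    ∀ j : ℕ, j ≠ i → j ≠ i + 1 → ftr j (lamc i) < ftr i (lamc i))

/-- `d(x) = min_k |λ_c^{(k)} - x|`. -/
def dmin (lamc : ℕ → ℝ) (x : ℝ) : ℝ := ⨅ k : ℕ, |lamc k - x|

/-- `d⁺(x) = min{λ_c^{(k)} - x : λ_c^{(k)} > x}`. -/
def dplus (lamc : ℕ → ℝ) (x : ℝ) : ℝ := sInf {y : ℝ | ∃ k, x < lamc k ∧ y = lamc k - x}

/-! ### SOS measures with general boundary conditions (floor 0, no ceiling) -/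

/-- Height functions equal to the boundary condition `φ` off `V` and nonnegative on `V`. -/
def bcConfigs (V : Finset Site) (φ : Site → ℤ) : Set (Site → ℤ) :=
  {ψ | (∀ x, x ∉ V → ψ x = φ x) ∧ ∀ v ∈ V, 0 ≤ ψ v}

/-- The partition function with boundary condition `φ`. -/
def Zbc (β lam : ℝ) (V : Finset Site) (φ : Site → ℤ) : ℝ :=
  ∑' ψ : Site → ℤ, Set.indicator (bcConfigs V φ) (sosWt β lam V) ψ

/-- Probability of an event under the SOS measure `μ_{φ,V}` (floor 0, no ceiling). -/
def Pbc (β lam : ℝ) (V : Finset Site) (φ : Site → ℤ) (E : Set (Site → ℤ)) : ℝ :=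
  (∑' ψ : Site → ℤ, Set.indicator (bcConfigs V φ ∩ E) (sosWt β lam V) ψ) /
    Zbc β lam V φ

/-! ### Glauber dynamics on the box with a ceiling -/

/-- A configuration on `Λ_n` with floor `0` and ceiling `ℓ`. -/
abbrev Cfg (n ℓ : ℕ) := {x : Site // x ∈ box n} → Fin (ℓ + 1)

/-- Extension of a configuration by the zero boundary condition. -/
def cExt {n ℓ : ℕ} (ψ : Cfg n ℓ) : Site → ℤ :=
  fun x => if h : x ∈ box n then ((ψ ⟨x, h⟩ : ℕ) : ℤ) else 0

/-- The weight of a configuration (zero boundary conditions). -/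
def cWt (n ℓ : ℕ) (β lam : ℝ) (ψ : Cfg n ℓ) : ℝ := sosWt β lam (box n) (cExt ψ)

/-- The partition function on `Λ_n` with ceiling `ℓ` and zero boundary conditions. -/
def cZ (n ℓ : ℕ) (β lam : ℝ) : ℝ := ∑ ψ : Cfg n ℓ, cWt n ℓ β lam ψ

/-- The SOS probability measure `μ_{n,λ}` (ceiling `ℓ`, zero boundary conditions). -/
def cPi (n ℓ : ℕ) (β lam : ℝ) (ψ : Cfg n ℓ) : ℝ := cWt n ℓ β lam ψ / cZ n ℓ β lam

/-- Probability of an event under `μ_{n,λ}`. -/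
def cProb (n ℓ : ℕ) (β lam : ℝ) (E : Set (Cfg n ℓ)) : ℝ :=
  (∑ ψ : Cfg n ℓ, if ψ ∈ E then cWt n ℓ β lam ψ else 0) / cZ n ℓ β lam

/-- The Glauber (heat-bath) jump rate from `ψ` to `ψ' ≠ ψ`: nonzero only if they differ
at a single site `v` by exactly one, in which case `v`'s height is resampled among
`{ψ_v - 1, ψ_v, ψ_v + 1}` (truncated at the floor and the ceiling) according to the
conditional probabilities given the other heights. -/
def glRate (n ℓ : ℕ) (β lam : ℝ) (ψ ψ' : Cfg n ℓ) : ℝ :=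
  if ψ = ψ' then 0
  else
    ∑ v : {x : Site // x ∈ box n},
      if (∀ u, u ≠ v → ψ u = ψ' u) ∧ (((ψ' v : ℕ) : ℤ) - ((ψ v : ℕ) : ℤ)) ^ 2 = 1 then
        cWt n ℓ β lam ψ' /
          ∑ t : Fin (ℓ + 1),
            (if (((t : ℕ) : ℤ) - ((ψ v : ℕ) : ℤ)) ^ 2 ≤ 1 then
              cWt n ℓ β lam (Function.update ψ v t) else 0)
      else 0

/-- Mean of an observable under `μ_{n,λ}`. -/
def cMean (n ℓ : ℕ) (β lam : ℝ) (f : Cfg n ℓ → ℝ) : ℝ :=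
  ∑ ψ : Cfg n ℓ, cPi n ℓ β lam ψ * f ψ

/-- Variance of an observable under `μ_{n,λ}`. -/
def cVar (n ℓ : ℕ) (β lam : ℝ) (f : Cfg n ℓ → ℝ) : ℝ :=
  ∑ ψ : Cfg n ℓ, cPi n ℓ β lam ψ * (f ψ - cMean n ℓ β lam f) ^ 2

/-- The Dirichlet form of the Glauber dynamics. -/
def cDirichlet (n ℓ : ℕ) (β lam : ℝ) (f : Cfg n ℓ → ℝ) : ℝ :=
  (1 / 2) * ∑ ψ : Cfg n ℓ, ∑ ψ' : Cfg n ℓ,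
    cPi n ℓ β lam ψ * glRate n ℓ β lam ψ ψ' * (f ψ' - f ψ) ^ 2

/-- The spectral gap `gap_{n,λ}` of the generator of the Glauber dynamics (ceiling `ℓ`):
by reversibility, the smallest nonzero eigenvalue of minus the generator equals the
infimum of the Rayleigh quotients `E(f,f)/Var(f)`. -/
def specGap (n ℓ : ℕ) (β lam : ℝ) : ℝ :=
  sInf {r : ℝ | ∃ f : Cfg n ℓ → ℝ,
    cVar n ℓ β lam f ≠ 0 ∧ r = cDirichlet n ℓ β lam f / cVar n ℓ β lam f}

end

noncomputable section

/-- Height functions on `ℤ²` equal to the boundary condition `φ` off `V` and respecting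
the floors `a` and the (possibly infinite) ceilings `b` on `V`. -/
def gConfigs (V : Finset Site) (a : Site → ℤ) (b : Site → WithTop ℤ) (φ : Site → ℤ) :
    Set (Site → ℤ) :=
  {ψ | (∀ x, x ∉ V → ψ x = φ x) ∧ ∀ v ∈ V, a v ≤ ψ v ∧ (ψ v : WithTop ℤ) ≤ b v}

/-- The partition function `Z^{a,b,φ}_{λ,V}`. -/
def gZ (β lam : ℝ) (V : Finset Site) (a : Site → ℤ) (b : Site → WithTop ℤ)
    (φ : Site → ℤ) : ℝ :=
  ∑' ψ : Site → ℤ, Set.indicator (gConfigs V a b φ) (sosWt β lam V) ψ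

/-- The expectation of `f` under the SOS measure `μ^{a,b,φ}_{λ,V}`. -/
def gExp (β lam : ℝ) (V : Finset Site) (a : Site → ℤ) (b : Site → WithTop ℤ)
    (φ : Site → ℤ) (f : (Site → ℤ) → ℝ) : ℝ :=
  (∑' ψ : Site → ℤ, Set.indicator (gConfigs V a b φ) (fun ψ => sosWt β lam V ψ * f ψ) ψ) /
    gZ β lam V a b φ

end

/-!
Write `Z^{a,b,φ}_{λ,V}` as a series over height functions `x : V → ℤ`. These form a
distributive lattice under pointwise `min`/`max`. The SOS energy is submodular, because
`|min a b - min c d| + |max a b - max c d| ≤ |a - c| + |b - d|`, while the field term is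
modular. Since `a ≤ a'`, `b ≤ b'` and `φ ≤ φ'` on `∂_o V`, the minimum of an `(a, b, φ)`
configuration and an `(a', b', φ')` configuration is again an `(a, b, φ)` configuration, and
their maximum an `(a', b', φ')` one. So for `λ₁ ≤ λ₂` the weights satisfy the Ahlswede–Daykin
condition `w_{λ₁}(x) w'_{λ₂}(y) ≤ w_{λ₂}(x ⊓ y) w'_{λ₁}(x ⊔ y)`, and the four functions
theorem gives `Z_{λ₁} Z'_{λ₂} ≤ Z_{λ₂} Z'_{λ₁}`. For `β > 0` and `λ ≥ 0` the series converge: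
the floor bounds the field term, and along a horizontal ray out of `V` the energy controls how
far each height can be from the boundary condition.
-/

open Finset

theorem tsum_mul_tsum_le_of_four_functions {α : Type*} [DistribLattice α]
    {f₁ f₂ f₃ f₄ : α → ℝ} (h₁ : 0 ≤ f₁) (h₂ : 0 ≤ f₂) (h₃ : 0 ≤ f₃) (h₄ : 0 ≤ f₄)
    (hf₁ : Summable f₁) (hf₂ : Summable f₂) (hf₃ : Summable f₃) (hf₄ : Summable f₄)
    (h : ∀ a b, f₁ a * f₂ b ≤ f₃ (a ⊓ b) * f₄ (a ⊔ b)) :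
    (∑' a, f₁ a) * ∑' a, f₂ a ≤ (∑' a, f₃ a) * ∑' a, f₄ a := by
  classical
  have hfinite : ∀ s t : Finset α,
      (∑ a ∈ s, f₁ a) * ∑ a ∈ t, f₂ a ≤ (∑' a, f₃ a) * ∑' a, f₄ a := fun s t =>
    (four_functions_theorem f₁ f₂ f₃ f₄ h₁ h₂ h₃ h₄ h s t).trans <|
      mul_le_mul (hf₃.sum_le_tsum _ fun a _ => h₃ a) (hf₄.sum_le_tsum _ fun a _ => h₄ a)
        (sum_nonneg fun a _ => h₄ a) (tsum_nonneg h₃)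
  refine le_of_tendsto' (Tendsto.mul_const _ hf₁.hasSum) fun s => ?_
  exact le_of_tendsto' (Tendsto.const_mul _ hf₂.hasSum) (hfinite s)

theorem summable_pi_prod {ι κ : Type*} [Fintype ι] {g : ι → κ → ℝ} (h₀ : ∀ i t, 0 ≤ g i t)
    (hg : ∀ i, Summable (g i)) : Summable fun x : ι → κ => ∏ i, g i (x i) := by
  classical
  refine summable_of_sum_le (c := ∏ i, ∑' t, g i t)
    (fun x => prod_nonneg fun i _ => h₀ i (x i)) fun S => ?_
  calc ∑ x ∈ S, ∏ i, g i (x i)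
      ≤ ∑ x ∈ Fintype.piFinset fun i => S.image (· i), ∏ i, g i (x i) :=
        sum_le_sum_of_subset_of_nonneg
          (fun x hx => Fintype.mem_piFinset.2 fun i => mem_image_of_mem _ hx)
          fun x _ _ => prod_nonneg fun i _ => h₀ i (x i)
    _ = ∏ i, ∑ t ∈ S.image (· i), g i t := (prod_univ_sum _ _).symm
    _ ≤ ∏ i, ∑' t, g i t :=
        prod_le_prod (fun i _ => sum_nonneg fun t _ => h₀ i t)
          fun i _ => (hg i).sum_le_tsum _ fun t _ => h₀ i t

theorem summable_exp_neg_mul_abs_sub_int {ε : ℝ} (hε : 0 < ε) (c : ℤ) :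
    Summable fun t : ℤ => Real.exp (-(ε * |(t : ℝ) - c|)) := by
  have hgeom : Summable fun n : ℕ => Real.exp (n * -ε) :=
    Real.summable_exp_nat_mul_iff.2 (neg_neg_of_pos hε)
  have hcentered : Summable fun t : ℤ => Real.exp (-(ε * |(t : ℝ)|)) := by
    refine .of_nat_of_neg (hgeom.congr fun n => ?_) (hgeom.congr fun n => ?_) <;>
      simp [mul_comm]
  refine ((Equiv.subRight c).summable_iff.2 hcentered).congr fun t => ?_
  simp

theorem abs_min_sub_min_add_abs_max_sub_max_le {𝕜 : Type*} [Field 𝕜] [LinearOrder 𝕜]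
    [IsStrictOrderedRing 𝕜] (a b c d : 𝕜) :
    |min a b - min c d| + |max a b - max c d| ≤ |a - c| + |b - d| := by
  rcases le_total a b with hab | hab <;> rcases le_total c d with hcd | hcd <;>
    simp only [min_eq_left, min_eq_right, max_eq_left, max_eq_right, hab, hcd] <;>
    rcases abs_cases (a - c) with ⟨h1, h1'⟩ | ⟨h1, h1'⟩ <;>
    rcases abs_cases (b - d) with ⟨h2, h2'⟩ | ⟨h2, h2'⟩ <;>
    rcases abs_cases (a - d) with ⟨h3, h3'⟩ | ⟨h3, h3'⟩ <;>
    rcases abs_cases (b - c) with ⟨h4, h4'⟩ | ⟨h4, h4'⟩ <;>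
    linarith

lemma neg_mem_dirs {d : Site} (hd : d ∈ dirs) : -d ∈ dirs := by
  fin_cases hd <;> decide

lemma sosEnergy_nonneg (V : Finset Site) (ψ : Site → ℤ) : 0 ≤ sosEnergy V ψ :=
  sum_nonneg fun _ _ => sum_nonneg fun _ _ =>
    mul_nonneg (by split_ifs <;> norm_num) (abs_nonneg _)

lemma sosEnergy_inf_add_sup_le (V : Finset Site) (ψ ψ' : Site → ℤ) :
    sosEnergy V (ψ ⊓ ψ') + sosEnergy V (ψ ⊔ ψ') ≤ sosEnergy V ψ + sosEnergy V ψ' := by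
  simp only [sosEnergy, ← sum_add_distrib, ← mul_add]
  refine sum_le_sum fun v _ => sum_le_sum fun d _ =>
    mul_le_mul_of_nonneg_left ?_ (by split_ifs <;> norm_num)
  push_cast [Pi.inf_apply, Pi.sup_apply]
  exact abs_min_sub_min_add_abs_max_sub_max_le _ _ _ _

lemma sosEnergy_congr {V : Finset Site} {ψ ψ' : Site → ℤ}
    (h : ∀ s, (s ∈ V ∨ ∃ d ∈ dirs, s + d ∈ V) → ψ s = ψ' s) :
    sosEnergy V ψ = sosEnergy V ψ' := by
  refine sum_congr rfl fun v hv => sum_congr rfl fun d hd => ?_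
  have hvd : ψ (v + d) = ψ' (v + d) := h _ (.inr ⟨-d, neg_mem_dirs hd, by simpa using hv⟩)
  rw [h v (.inl hv), hvd]

def withBoundary (V : Finset Site) (φ : Site → ℤ) (x : V → ℤ) : Site → ℤ :=
  fun s => if h : s ∈ V then x ⟨s, h⟩ else φ s

noncomputable def gWeight (β lam : ℝ) (V : Finset Site) (a : Site → ℤ) (b : Site → WithTop ℤ)
    (φ : Site → ℤ) (x : V → ℤ) : ℝ :=
  (gConfigs V a b φ).indicator (sosWt β lam V) (withBoundary V φ x)

section WithBoundary

variable {V : Finset Site} {a a' : Site → ℤ} {b b' : Site → WithTop ℤ} {φ φ' : Site → ℤ}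

@[simp]
lemma withBoundary_coe (x : V → ℤ) (v : V) : withBoundary V φ x v = x v := by
  simp [withBoundary]

lemma withBoundary_of_notMem (x : V → ℤ) {s : Site} (hs : s ∉ V) :
    withBoundary V φ x s = φ s := by
  simp [withBoundary, hs]

lemma withBoundary_injective : Function.Injective (withBoundary V φ) := fun x y h =>
  funext fun v => by simpa using congrFun h v

lemma withBoundary_mem_gConfigs_iff {x : V → ℤ} :
    withBoundary V φ x ∈ gConfigs V a b φ ↔ ∀ v : V, a v ≤ x v ∧ (x v : WithTop ℤ) ≤ b v := by
  refine ⟨fun h v => by simpa using h.2 v v.2, fun h => ⟨fun s hs => ?_, fun v hv => ?_⟩⟩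
  · exact withBoundary_of_notMem x hs
  · simpa [withBoundary, hv] using h ⟨v, hv⟩

lemma gConfigs_subset_range_withBoundary : gConfigs V a b φ ⊆ Set.range (withBoundary V φ) := by
  refine fun ψ hψ => ⟨fun v => ψ v, funext fun s => ?_⟩
  by_cases hs : s ∈ V
  · simp [withBoundary, hs]
  · rw [withBoundary_of_notMem _ hs, hψ.1 s hs]

lemma gZ_eq_tsum_gWeight (β lam : ℝ) :
    gZ β lam V a b φ = ∑' x, gWeight β lam V a b φ x :=
  (withBoundary_injective.tsum_eq fun _ hψ =>
    gConfigs_subset_range_withBoundary (Set.mem_of_indicator_ne_zero hψ)).symm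

lemma gWeight_nonneg {β lam : ℝ} {x : V → ℤ} : 0 ≤ gWeight β lam V a b φ x :=
  Set.indicator_nonneg (fun _ _ => (Real.exp_pos _).le) _

lemma withBoundary_inf (x y : V → ℤ) :
    withBoundary V φ x ⊓ withBoundary V φ' y = withBoundary V (φ ⊓ φ') (x ⊓ y) := by
  ext s
  by_cases hs : s ∈ V <;> simp [withBoundary, hs]

lemma withBoundary_sup (x y : V → ℤ) :
    withBoundary V φ x ⊔ withBoundary V φ' y = withBoundary V (φ ⊔ φ') (x ⊔ y) := by
  ext s
  by_cases hs : s ∈ V <;> simp [withBoundary, hs]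

lemma sosEnergy_withBoundary_congr (h : ∀ w, w ∉ V → (∃ d ∈ dirs, w + d ∈ V) → φ w = φ' w)
    (x : V → ℤ) : sosEnergy V (withBoundary V φ x) = sosEnergy V (withBoundary V φ' x) := by
  refine sosEnergy_congr fun s hs => ?_
  by_cases hsV : s ∈ V
  · simp [withBoundary, hsV]
  · rw [withBoundary_of_notMem _ hsV, withBoundary_of_notMem _ hsV,
      h s hsV (hs.resolve_left hsV)]

lemma sosField_withBoundary (x : V → ℤ) :
    sosField V (withBoundary V φ x) = ∑ v, (x v : ℝ) := by
  rw [sosField, ← sum_coe_sort]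
  simp

end WithBoundary

section Correlation

variable {V : Finset Site} {a a' : Site → ℤ} {b b' : Site → WithTop ℤ} {φ φ' : Site → ℤ}

lemma withBoundary_inf_mem_gConfigs (ha : ∀ v ∈ V, a v ≤ a' v) {x y : V → ℤ}
    (hx : withBoundary V φ x ∈ gConfigs V a b φ)
    (hy : withBoundary V φ' y ∈ gConfigs V a' b' φ') :
    withBoundary V φ (x ⊓ y) ∈ gConfigs V a b φ := by
  rw [withBoundary_mem_gConfigs_iff] at hx hy ⊢
  exact fun v => ⟨le_inf (hx v).1 ((ha v v.2).trans (hy v).1),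
    (WithTop.coe_le_coe.2 inf_le_left).trans (hx v).2⟩

lemma withBoundary_sup_mem_gConfigs (hb : ∀ v ∈ V, b v ≤ b' v) {x y : V → ℤ}
    (hx : withBoundary V φ x ∈ gConfigs V a b φ)
    (hy : withBoundary V φ' y ∈ gConfigs V a' b' φ') :
    withBoundary V φ' (x ⊔ y) ∈ gConfigs V a' b' φ' := by
  rw [withBoundary_mem_gConfigs_iff] at hx hy ⊢
  exact fun v => ⟨(hy v).1.trans le_sup_right,
    (WithTop.coe_max (x v) (y v)).trans_le (max_le ((hx v).2.trans (hb v v.2)) (hy v).2)⟩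

lemma sosEnergy_withBoundary_inf_add_sup_le
    (hφ : ∀ w, w ∉ V → (∃ d ∈ dirs, w + d ∈ V) → φ w ≤ φ' w) (x y : V → ℤ) :
    sosEnergy V (withBoundary V φ (x ⊓ y)) + sosEnergy V (withBoundary V φ' (x ⊔ y)) ≤
      sosEnergy V (withBoundary V φ x) + sosEnergy V (withBoundary V φ' y) := by
  rw [sosEnergy_withBoundary_congr (φ := φ) (φ' := φ ⊓ φ')
      (fun w hw hwV => (inf_of_le_left (hφ w hw hwV)).symm),
    sosEnergy_withBoundary_congr (φ := φ') (φ' := φ ⊔ φ')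
      (fun w hw hwV => (sup_of_le_right (hφ w hw hwV)).symm),
    ← withBoundary_inf, ← withBoundary_sup]
  exact sosEnergy_inf_add_sup_le V _ _

lemma gWeight_mul_le_inf_sup {β lam₁ lam₂ : ℝ} (hβ : 0 ≤ β) (hlam : lam₁ ≤ lam₂)
    (ha : ∀ v ∈ V, a v ≤ a' v) (hb : ∀ v ∈ V, b v ≤ b' v)
    (hφ : ∀ w, w ∉ V → (∃ d ∈ dirs, w + d ∈ V) → φ w ≤ φ' w) (x y : V → ℤ) :
    gWeight β lam₁ V a b φ x * gWeight β lam₂ V a' b' φ' y ≤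
      gWeight β lam₂ V a b φ (x ⊓ y) * gWeight β lam₁ V a' b' φ' (x ⊔ y) := by
  have hRHS : 0 ≤ gWeight β lam₂ V a b φ (x ⊓ y) * gWeight β lam₁ V a' b' φ' (x ⊔ y) :=
    mul_nonneg gWeight_nonneg gWeight_nonneg
  by_cases hx : withBoundary V φ x ∈ gConfigs V a b φ
  swap
  · simpa [gWeight, hx] using hRHS
  by_cases hy : withBoundary V φ' y ∈ gConfigs V a' b' φ'
  swap
  · simpa [gWeight, hy] using hRHS
  simp only [gWeight, Set.indicator_of_mem hx, Set.indicator_of_mem hy,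
    Set.indicator_of_mem (withBoundary_inf_mem_gConfigs ha hx hy),
    Set.indicator_of_mem (withBoundary_sup_mem_gConfigs hb hx hy), sosWt, ← Real.exp_add,
    Real.exp_le_exp, sosField_withBoundary]
  have hE := sosEnergy_withBoundary_inf_add_sup_le hφ x y
  have hF : ∑ v, ((x ⊓ y) v : ℝ) + ∑ v, ((x ⊔ y) v : ℝ) = ∑ v, (x v : ℝ) + ∑ v, (y v : ℝ) := by
    simp only [← sum_add_distrib, Pi.inf_apply, Pi.sup_apply, Int.cast_min, Int.cast_max,
      min_add_max]
  have hFy : ∑ v, ((x ⊓ y) v : ℝ) ≤ ∑ v, (y v : ℝ) :=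
    sum_le_sum fun v _ => Int.cast_le.2 inf_le_right
  linarith [mul_le_mul_of_nonneg_left hE hβ, mul_le_mul_of_nonneg_left hFy (sub_nonneg.2 hlam),
    congrArg (lam₁ * ·) hF]

end Correlation

section Confinement

variable {V : Finset Site} {φ : Site → ℤ}

lemma abs_sub_le_two_mul_sosEnergy (ψ : Site → ℤ) {u d : Site} (hd : d ∈ dirs)
    (hu : u ∈ V ∨ u + d ∈ V) : |(ψ u : ℝ) - ψ (u + d)| ≤ 2 * sosEnergy V ψ := by
  have hterm_nonneg : ∀ w e,
      0 ≤ (if w + e ∈ V then (1 : ℝ) / 2 else 1) * |(ψ w : ℝ) - ψ (w + e)| :=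
    fun _ _ => mul_nonneg (by split_ifs <;> norm_num) (abs_nonneg _)
  have hinside : ∀ v ∈ V, ∀ d ∈ dirs, |(ψ v : ℝ) - ψ (v + d)| ≤ 2 * sosEnergy V ψ := by
    intro v hv d hd
    calc |(ψ v : ℝ) - ψ (v + d)|
        ≤ 2 * ((if v + d ∈ V then (1 : ℝ) / 2 else 1) * |(ψ v : ℝ) - ψ (v + d)|) := by
          split_ifs <;> linarith [abs_nonneg ((ψ v : ℝ) - ψ (v + d))]
      _ ≤ 2 * sosEnergy V ψ := by
          gcongr
          exact (single_le_sum (fun e _ => hterm_nonneg v e) hd).trans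
            (single_le_sum (fun w _ => sum_nonneg fun e _ => hterm_nonneg w e) hv)
  rcases hu with hu | hu
  · exact hinside u hu d hd
  · simpa [abs_sub_comm] using hinside _ hu (-d) (neg_mem_dirs hd)

lemma exists_add_notMem (V : Finset Site) (v : Site) : ∃ n : ℕ, v + ((n : ℤ), 0) ∉ V := by
  by_contra! h
  refine not_injective_infinite_finite (fun n : ℕ => (⟨_, h n⟩ : V)) fun m n hmn => ?_
  simpa using congrArg (fun w : V => w.1.1) hmn

lemma abs_sub_le_sum_range_of_notMem {ψ : Site → ℤ} (hψ : ∀ s, s ∉ V → ψ s = φ s) (v : Site)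
    {n : ℕ} (hn : v + ((n : ℤ), 0) ∉ V) :
    |(ψ v : ℝ) - φ (v + ((n : ℤ), 0))| ≤ ∑ k ∈ range n,
      (2 * sosEnergy V ψ + |(φ (v + ((k : ℤ), 0)) : ℝ) - φ (v + ((k : ℤ) + 1, 0))|) := by
  rw [← hψ _ hn]
  calc |(ψ v : ℝ) - ψ (v + ((n : ℤ), 0))|
      ≤ ∑ k ∈ range n, |(ψ (v + ((k : ℤ), 0)) : ℝ) - ψ (v + ((k : ℤ) + 1, 0))| := by
        have h := dist_le_range_sum_dist (fun k => (ψ (v + ((k : ℤ), 0)) : ℝ)) n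
        simp only [Real.dist_eq, Nat.cast_zero, Nat.cast_succ] at h
        rwa [show v + ((0 : ℤ), (0 : ℤ)) = v from add_zero v] at h
    _ ≤ _ := sum_le_sum fun k _ => ?_
  have hstep : v + ((k : ℤ) + 1, 0) = v + ((k : ℤ), 0) + (1, 0) := by
    ext <;> simp [add_assoc]
  by_cases hk : v + ((k : ℤ), 0) ∈ V ∨ v + ((k : ℤ) + 1, 0) ∈ V
  · rw [hstep] at hk ⊢
    linarith [abs_sub_le_two_mul_sosEnergy ψ (by decide) hk,
      abs_nonneg ((φ (v + ((k : ℤ), 0)) : ℝ) - φ (v + ((k : ℤ), 0) + (1, 0)))]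
  · push Not at hk
    rw [hψ _ hk.1, hψ _ hk.2]
    linarith [sosEnergy_nonneg V ψ]

lemma exists_sum_abs_sub_le_sosEnergy (V : Finset Site) (φ : Site → ℤ) :
    ∃ (c : Site → ℤ) (K : ℝ), 0 < K ∧ ∀ ψ : Site → ℤ, (∀ s, s ∉ V → ψ s = φ s) →
      ∑ v ∈ V, |(ψ v : ℝ) - c v| ≤ K * (sosEnergy V ψ + 1) := by
  choose n hn using exists_add_notMem V
  set D : Site → ℝ := fun v =>
    ∑ k ∈ range (n v), |(φ (v + ((k : ℤ), 0)) : ℝ) - φ (v + ((k : ℤ) + 1, 0))|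
  have hD : ∀ v, 0 ≤ D v := fun v => sum_nonneg fun k _ => abs_nonneg _
  refine ⟨fun v => φ (v + ((n v : ℤ), 0)), ∑ v ∈ V, (2 * n v + D v) + 1,
    by positivity, fun ψ hψ => ?_⟩
  have hE := sosEnergy_nonneg V ψ
  calc ∑ v ∈ V, |(ψ v : ℝ) - φ (v + ((n v : ℤ), 0))|
      ≤ ∑ v ∈ V, (2 * n v * sosEnergy V ψ + D v) := sum_le_sum fun v _ =>
        (abs_sub_le_sum_range_of_notMem hψ v (hn v)).trans_eq <| by
          rw [sum_add_distrib, sum_const, card_range, nsmul_eq_mul]; ring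
    _ ≤ ∑ v ∈ V, (2 * n v + D v) * (sosEnergy V ψ + 1) :=
        sum_le_sum fun v _ => by nlinarith [hD v, (n v).cast_nonneg (α := ℝ)]
    _ ≤ (∑ v ∈ V, (2 * n v + D v) + 1) * (sosEnergy V ψ + 1) := by
        rw [← sum_mul]; nlinarith

end Confinement

section Summability

variable {V : Finset Site} {a : Site → ℤ} {b : Site → WithTop ℤ} {φ : Site → ℤ} {β lam : ℝ}

lemma summable_gWeight (hβ : 0 < β) (hlam : 0 ≤ lam) : Summable (gWeight β lam V a b φ) := by
  obtain ⟨c, K, hK, hconf⟩ := exists_sum_abs_sub_le_sosEnergy V φ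
  have hε : 0 < β / K := div_pos hβ hK
  refine .of_nonneg_of_le (fun _ => gWeight_nonneg) (fun x => ?_)
    ((summable_pi_prod (fun _ _ => (Real.exp_pos _).le)
      fun v : V => summable_exp_neg_mul_abs_sub_int hε (c v)).mul_left
      (Real.exp (β - lam * ∑ v ∈ V, (a v : ℝ))))
  by_cases hx : withBoundary V φ x ∈ gConfigs V a b φ
  swap
  · simp only [gWeight, Set.indicator_of_notMem hx]
    positivity
  have hdev :
      β / K * ∑ v : V, |(x v : ℝ) - c v| ≤ β * (sosEnergy V (withBoundary V φ x) + 1) := by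
    have h := hconf _ fun s hs => withBoundary_of_notMem x hs
    rw [← sum_coe_sort] at h
    simp only [withBoundary_coe] at h
    calc β / K * ∑ v : V, |(x v : ℝ) - c v|
        ≤ β / K * (K * (sosEnergy V (withBoundary V φ x) + 1)) := by gcongr
      _ = β * (sosEnergy V (withBoundary V φ x) + 1) := by field_simp
  have hfloor : ∑ v ∈ V, (a v : ℝ) ≤ ∑ v, (x v : ℝ) := by
    rw [← sum_coe_sort]
    exact sum_le_sum fun v _ => Int.cast_le.2 (withBoundary_mem_gConfigs_iff.1 hx v).1
  rw [gWeight, Set.indicator_of_mem hx, sosWt, sosField_withBoundary, ← Real.exp_sum,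
    ← Real.exp_add, Real.exp_le_exp, sum_neg_distrib, ← mul_sum]
  linarith [mul_le_mul_of_nonneg_left hfloor hlam]

lemma gZ_pos (hβ : 0 < β) (hlam : 0 ≤ lam) (hab : ∀ v ∈ V, (a v : WithTop ℤ) < b v) :
    0 < gZ β lam V a b φ := by
  have hfloor_mem : withBoundary V φ (fun v => a v) ∈ gConfigs V a b φ :=
    withBoundary_mem_gConfigs_iff.2 fun v => ⟨le_rfl, (hab v v.2).le⟩
  rw [gZ_eq_tsum_gWeight]
  refine (summable_gWeight hβ hlam).tsum_pos (fun _ => gWeight_nonneg) (fun v => a v) ?_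
  rw [gWeight, Set.indicator_of_mem hfloor_mem]
  exact Real.exp_pos _

end Summability

theorem statement6_general (β : ℝ) (hβ : 0 < β) (V : Finset Site)
    (a a' : Site → ℤ) (b b' : Site → WithTop ℤ)
    (hab' : ∀ v ∈ V, (a' v : WithTop ℤ) < b' v)
    (ha : ∀ v ∈ V, a v ≤ a' v) (hb : ∀ v ∈ V, b v ≤ b' v)
    (φ φ' : Site → ℤ)
    (hφ : ∀ w, w ∉ V → (∃ d ∈ dirs, w + d ∈ V) → φ w ≤ φ' w) :
    MonotoneOn (fun lam : ℝ => gZ β lam V a b φ / gZ β lam V a' b' φ')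
      (Set.Ici (0 : ℝ)) := by
  intro lam₁ hlam₁ lam₂ hlam₂ hlam
  rw [Set.mem_Ici] at hlam₁ hlam₂
  dsimp only
  rw [div_le_div_iff₀ (gZ_pos hβ hlam₁ hab') (gZ_pos hβ hlam₂ hab'), gZ_eq_tsum_gWeight,
    gZ_eq_tsum_gWeight, gZ_eq_tsum_gWeight, gZ_eq_tsum_gWeight]
  exact tsum_mul_tsum_le_of_four_functions (fun _ => gWeight_nonneg) (fun _ => gWeight_nonneg)
    (fun _ => gWeight_nonneg) (fun _ => gWeight_nonneg)
    (summable_gWeight hβ hlam₁) (summable_gWeight hβ hlam₂)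
    (summable_gWeight hβ hlam₂) (summable_gWeight hβ hlam₁)
    (gWeight_mul_le_inf_sup hβ.le hlam ha hb hφ)

/-- Lemma 2.3 of the paper. For every finite `V`, `β > 0`, boundary
conditions `φ ≤ φ'` on `∂_o V`, and floor/ceiling pairs with `a ≤ a'` and `b ≤ b'` on
`V`, the map `λ ↦ Z^{a,b,φ}_{λ,V} / Z^{a',b',φ'}_{λ,V}` is nondecreasing in `λ ≥ 0`
(i.e., its derivative in `λ` is nonnegative). -/
theorem statement6 (β : ℝ) (hβ : 0 < β) (V : Finset Site)
    (a a' : Site → ℤ) (b b' : Site → WithTop ℤ)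
    (hab : ∀ v ∈ V, (a v : WithTop ℤ) < b v)
    (hab' : ∀ v ∈ V, (a' v : WithTop ℤ) < b' v)
    (ha : ∀ v ∈ V, a v ≤ a' v) (hb : ∀ v ∈ V, b v ≤ b' v)
    (φ φ' : Site → ℤ)
    (hφ : ∀ w, w ∉ V → (∃ d ∈ dirs, w + d ∈ V) → φ w ≤ φ' w) :
    MonotoneOn (fun lam : ℝ => gZ β lam V a b φ / gZ β lam V a' b' φ')
      (Set.Ici (0 : ℝ)) :=
  statement6_general β hβ V a a' b b' hab' ha hb φ φ' hφ
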